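/- arXiv:1402.1717 — 3 statements merged into one kernel-verified Lean document; each statement's English description precedes it below -/
import Mathlib

section
/- For every s ∈ ℂ, on (𝔳 × 𝔷) ∖ {(0,0)} one has Δ² K_s = B(s) ( 2p K_{s−1} + (B(s−1) + 16(s−1)) |X|⁴ K_{s−2} ). -/
open scoped InnerProductSpace

noncomputable section

/-- The left-invariant vector field on `N = 𝔳 × 𝔷` associated to `S ∈ 𝔳`:
`(Sf)(X,Z) = ∂_𝔳 f(X,Z)[S] - ½ ∂_𝔷 f(X,Z)[[S,X]]`. -/
def vfV {V W : Type*} [NormedAddCommGroup V] [InnerProductSpace ℝ V]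
    [NormedAddCommGroup W] [InnerProductSpace ℝ W]
    (br : V →ₗ[ℝ] V →ₗ[ℝ] W) (S : V) (f : V × W → ℂ) : V × W → ℂ :=
  fun x => fderiv ℝ f x (S, 0) - (1/2 : ℂ) * fderiv ℝ f x (0, br S x.1)

/-- The left-invariant vector field associated to `T ∈ 𝔷`: `(Tf)(X,Z) = ∂_𝔷 f(X,Z)[T]`. -/
def vfW {V W : Type*} [NormedAddCommGroup V] [InnerProductSpace ℝ V]
    [NormedAddCommGroup W] [InnerProductSpace ℝ W]
    (T : W) (f : V × W → ℂ) : V × W → ℂ :=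
  fun x => fderiv ℝ f x (0, T)

/-- Sub-Laplacian `∑_{j ∈ fs} S_j²` associated to a family of vectors in `𝔳`. -/
def subLap {V W : Type*} [NormedAddCommGroup V] [InnerProductSpace ℝ V]
    [NormedAddCommGroup W] [InnerProductSpace ℝ W] {ι : Type*}
    (br : V →ₗ[ℝ] V →ₗ[ℝ] W) (fs : Finset ι) (S : ι → V) (f : V × W → ℂ) : V × W → ℂ :=
  fun x => ∑ j ∈ fs, vfV br (S j) (vfV br (S j) f) x

/-- Central Laplacian `∑_{j ∈ fs} T_j²` associated to a family of vectors in `𝔷`. -/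
def boxLap {V W : Type*} [NormedAddCommGroup V] [InnerProductSpace ℝ V]
    [NormedAddCommGroup W] [InnerProductSpace ℝ W] {ι : Type*}
    (fs : Finset ι) (T : ι → W) (f : V × W → ℂ) : V × W → ℂ :=
  fun x => ∑ j ∈ fs, vfW (T j) (vfW (T j) f) x

/-- The norm function `K(X,Z) = |X|⁴ + |Z|²`. -/
def Kfun {V W : Type*} [NormedAddCommGroup V] [NormedAddCommGroup W] (x : V × W) : ℝ :=
  ‖x.1‖^4 + ‖x.2‖^2

/-- The complex power `K_s = K^s`. -/
def Ks {V W : Type*} [NormedAddCommGroup V] [NormedAddCommGroup W] (s : ℂ) (x : V × W) : ℂ :=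
  (Kfun x : ℂ) ^ s

/-- `ρ = (p+2q)/2` as a complex number. -/
def rhoC (p q : ℕ) : ℂ := ((p : ℂ) + 2*q)/2

/-- `B(s) = 4s(4s+2ρ-2)`. -/
def Bc (p q : ℕ) (s : ℂ) : ℂ := 4*s*(4*s + 2*(rhoC p q) - 2)

/-- The component `X₂` of `X ∈ 𝔳` in `𝔳₂ = 𝔳₁ᗮ`. -/
def projPerp {V : Type*} [NormedAddCommGroup V] [InnerProductSpace ℝ V]
    [FiniteDimensional ℝ V] (V₁ : Submodule ℝ V) (X : V) : V :=
  (V₁ᗮ.orthogonalProjectionOnto X : V)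

/-! Each left-invariant field `S` acts at `(X, Z)` as the derivation `f ↦ Df (S, -½[S,X])`, so the
sub-Laplacian obeys the product and chain rules `Δ(fg) = f Δg + 2 Γ(f,g) + g Δf` and
`Δ(f^t) = t f^(t-1) Δf + t(t-1) f^(t-2) Γ(f,f)`, where `Γ(f,g) = Σ S_j f · S_j g`.
For `u = |X|²` one has `S u = 2⟨X,S⟩` and `S K = ⟨4uX + J_Z X, S⟩`; the H-type identities
`⟨J_Z X, X⟩ = 0` and `|J_Z X|² = 16|Z|²|X|²` then give `Δu = 2p`, `ΔK = 4(p + 2q + 2) u`,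
`Γ(u,K) = 8u²` and `Γ(K,K) = 16uK`. Hence `Δ K_s = B(s) u K_(s-1)`, and one more application of
the product rule, to `u K_(s-1)`, gives the formula. -/

open Filter Topology

section VectorField

variable {V W : Type*} [NormedAddCommGroup V] [InnerProductSpace ℝ V]
    [NormedAddCommGroup W] [InnerProductSpace ℝ W] (br : V →ₗ[ℝ] V →ₗ[ℝ] W) (S : V)
    {f g : V × W → ℂ} {x : V × W}

theorem vfV_eq_fderiv (f : V × W → ℂ) (x : V × W) :
    vfV br S f x = fderiv ℝ f x (S, -(2⁻¹ : ℝ) • br S x.1) := by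
  have hdir : ((S, -(2⁻¹ : ℝ) • br S x.1) : V × W) = (S, 0) + (-(2⁻¹ : ℝ)) • (0, br S x.1) := by
    simp
  rw [hdir, map_add, map_smul, vfV, Complex.real_smul]
  push_cast
  ring

theorem Filter.EventuallyEq.vfV_eq (h : f =ᶠ[𝓝 x] g) : vfV br S f x = vfV br S g x := by
  simp only [vfV_eq_fderiv, h.fderiv_eq]

theorem vfV_add (hf : DifferentiableAt ℝ f x) (hg : DifferentiableAt ℝ g x) :
    vfV br S (fun y => f y + g y) x = vfV br S f x + vfV br S g x := by
  simp only [vfV_eq_fderiv, fderiv_fun_add hf hg, add_apply]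

theorem vfV_mul (hf : DifferentiableAt ℝ f x) (hg : DifferentiableAt ℝ g x) :
    vfV br S (fun y => f y * g y) x = f x * vfV br S g x + vfV br S f x * g x := by
  rw [vfV_eq_fderiv, vfV_eq_fderiv, vfV_eq_fderiv, fderiv_fun_mul hf hg]
  simp only [add_apply, smul_apply, smul_eq_mul]
  ring

theorem vfV_const_mul (c : ℂ) (f : V × W → ℂ) :
    vfV br S (fun y => c * f y) = fun x => c * vfV br S f x := by
  funext x
  rw [vfV_eq_fderiv, vfV_eq_fderiv]
  show fderiv ℝ (c • f) x _ = _
  rw [fderiv_const_smul_field]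
  rfl

theorem vfV_cpow (t : ℂ) (hf : DifferentiableAt ℝ f x) (hx : f x ∈ Complex.slitPlane) :
    vfV br S (fun y => f y ^ t) x = t * f x ^ (t - 1) * vfV br S f x := by
  have h := (Complex.hasStrictDerivAt_cpow_const (c := t) hx).hasDerivAt.comp_hasFDerivAt x
    hf.hasFDerivAt
  simp only [vfV_eq_fderiv, Function.comp_def] at h ⊢
  rw [h.fderiv, smul_apply, smul_eq_mul]

theorem vfV_ofReal {φ : V × W → ℝ} (hφ : DifferentiableAt ℝ φ x) :
    vfV br S (fun y => (φ y : ℂ)) x = fderiv ℝ φ x (S, -(2⁻¹ : ℝ) • br S x.1) := by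
  have h := Complex.ofRealCLM.hasFDerivAt.comp x hφ.hasFDerivAt
  simp only [vfV_eq_fderiv, Function.comp_def, Complex.ofRealCLM_apply] at h ⊢
  rw [h.fderiv]
  rfl

theorem ContDiffAt.vfV [FiniteDimensional ℝ V] {n : WithTop ℕ∞} (hf : ContDiffAt ℝ (n + 1) f x) :
    ContDiffAt ℝ n (_root_.vfV br S f) x := by
  have hdir : ContDiff ℝ n fun y : V × W => ((S, -(2⁻¹ : ℝ) • br S y.1) : V × W) :=
    contDiff_const.prodMk
      (((LinearMap.toContinuousLinearMap (br S)).contDiff.comp contDiff_fst).const_smul _)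
  rw [show _root_.vfV br S f = _ from funext (vfV_eq_fderiv br S f)]
  exact (hf.fderiv_right le_rfl).clm_apply hdir.contDiffAt

theorem vfV_vfV_mul [FiniteDimensional ℝ V] (hf : ContDiffAt ℝ 2 f x) (hg : ContDiffAt ℝ 2 g x) :
    vfV br S (vfV br S fun y => f y * g y) x =
      f x * vfV br S (vfV br S g) x + 2 * (vfV br S f x * vfV br S g x)
        + vfV br S (vfV br S f) x * g x := by
  have hf' : ∀ᶠ y in 𝓝 x, DifferentiableAt ℝ f y :=
    (hf.eventually (by simp)).mono fun y hy => hy.differentiableAt (by simp)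
  have hg' : ∀ᶠ y in 𝓝 x, DifferentiableAt ℝ g y :=
    (hg.eventually (by simp)).mono fun y hy => hy.differentiableAt (by simp)
  have hSf : DifferentiableAt ℝ (vfV br S f) x :=
    (hf.vfV br S (n := 1)).differentiableAt one_ne_zero
  have hSg : DifferentiableAt ℝ (vfV br S g) x :=
    (hg.vfV br S (n := 1)).differentiableAt one_ne_zero
  have hfx := hf'.self_of_nhds
  have hgx := hg'.self_of_nhds
  have hleib : vfV br S (fun y => f y * g y) =ᶠ[𝓝 x]
      fun y => f y * vfV br S g y + vfV br S f y * g y :=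
    (hf'.and hg').mono fun y hy => vfV_mul br S hy.1 hy.2
  rw [hleib.vfV_eq, vfV_add br S (hfx.fun_mul hSg) (hSf.fun_mul hgx), vfV_mul br S hfx hSg,
    vfV_mul br S hSf hgx]
  ring

theorem vfV_vfV_cpow [FiniteDimensional ℝ V] (t : ℂ) (hf : ContDiffAt ℝ 2 f x)
    (hx : f x ∈ Complex.slitPlane) :
    vfV br S (vfV br S fun y => f y ^ t) x =
      t * f x ^ (t - 1) * vfV br S (vfV br S f) x
        + t * (t - 1) * f x ^ (t - 2) * vfV br S f x ^ 2 := by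
  have hf' : ∀ᶠ y in 𝓝 x, DifferentiableAt ℝ f y ∧ f y ∈ Complex.slitPlane :=
    ((hf.eventually (by simp)).mono fun y hy => hy.differentiableAt (by simp)).and
      (hf.continuousAt.eventually_mem (Complex.isOpen_slitPlane.mem_nhds hx))
  have hSf : DifferentiableAt ℝ (vfV br S f) x :=
    (hf.vfV br S (n := 1)).differentiableAt one_ne_zero
  have hfx := hf'.self_of_nhds.1
  have hchain : vfV br S (fun y => f y ^ t) =ᶠ[𝓝 x] fun y => t * f y ^ (t - 1) * vfV br S f y :=
    hf'.mono fun y hy => vfV_cpow br S t hy.1 hy.2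
  have hpow : DifferentiableAt ℝ (fun y => t * f y ^ (t - 1)) x :=
    ((Complex.hasStrictDerivAt_cpow_const hx).hasDerivAt.comp_hasFDerivAt x
      hfx.hasFDerivAt).differentiableAt.const_mul t
  rw [hchain.vfV_eq, vfV_mul br S hpow hSf, vfV_const_mul]
  dsimp only
  rw [vfV_cpow br S _ hfx hx, show t - 1 - 1 = t - 2 by ring]
  ring

end VectorField

section SubLaplacian

variable {V W ι : Type*} [NormedAddCommGroup V] [InnerProductSpace ℝ V]
    [NormedAddCommGroup W] [InnerProductSpace ℝ W]
    (br : V →ₗ[ℝ] V →ₗ[ℝ] W) (fs : Finset ι) (S : ι → V) {f g : V × W → ℂ} {x : V × W}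

def carreDuChamp (f g : V × W → ℂ) (x : V × W) : ℂ :=
  ∑ j ∈ fs, vfV br (S j) f x * vfV br (S j) g x

theorem Filter.EventuallyEq.subLap_eq (h : f =ᶠ[𝓝 x] g) :
    subLap br fs S f x = subLap br fs S g x :=
  Finset.sum_congr rfl fun j _ =>
    Filter.EventuallyEq.vfV_eq br (S j) (h.eventuallyEq_nhds.mono fun _ hy => hy.vfV_eq br (S j))

theorem subLap_const_mul (c : ℂ) (f : V × W → ℂ) (x : V × W) :
    subLap br fs S (fun y => c * f y) x = c * subLap br fs S f x := by
  simp only [subLap, vfV_const_mul, Finset.mul_sum]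

theorem subLap_mul [FiniteDimensional ℝ V] (hf : ContDiffAt ℝ 2 f x) (hg : ContDiffAt ℝ 2 g x) :
    subLap br fs S (fun y => f y * g y) x =
      f x * subLap br fs S g x + 2 * carreDuChamp br fs S f g x + subLap br fs S f x * g x := by
  simp only [subLap, carreDuChamp, vfV_vfV_mul br _ hf hg, Finset.sum_add_distrib,
    Finset.mul_sum, Finset.sum_mul]

theorem subLap_cpow [FiniteDimensional ℝ V] (t : ℂ) (hf : ContDiffAt ℝ 2 f x)
    (hx : f x ∈ Complex.slitPlane) :
    subLap br fs S (fun y => f y ^ t) x =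
      t * f x ^ (t - 1) * subLap br fs S f x
        + t * (t - 1) * f x ^ (t - 2) * carreDuChamp br fs S f f x := by
  simp only [subLap, carreDuChamp, vfV_vfV_cpow br _ t hf hx, Finset.sum_add_distrib,
    Finset.mul_sum, sq]

theorem carreDuChamp_cpow_right (t : ℂ) (hg : DifferentiableAt ℝ g x)
    (hx : g x ∈ Complex.slitPlane) :
    carreDuChamp br fs S f (fun y => g y ^ t) x =
      t * g x ^ (t - 1) * carreDuChamp br fs S f g x := by
  simp only [carreDuChamp, vfV_cpow br _ t hg hx, Finset.mul_sum]
  exact Finset.sum_congr rfl fun j _ => by ring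

end SubLaplacian

section HType

variable {V W : Type*} [NormedAddCommGroup V] [InnerProductSpace ℝ V]
    [NormedAddCommGroup W] [InnerProductSpace ℝ W]
    {br : V →ₗ[ℝ] V →ₗ[ℝ] W} {J : W →ₗ[ℝ] V →ₗ[ℝ] V}

theorem bracket_swap (hbr : ∀ X : V, br X X = 0) (X Y : V) : br Y X = -br X Y := by
  have h := hbr (X + Y)
  simp only [map_add, LinearMap.add_apply, hbr, zero_add, add_zero] at h
  exact eq_neg_of_add_eq_zero_left h

theorem inner_J_self (hbr : ∀ X : V, br X X = 0)
    (hJ : ∀ (z : W) (X Y : V), ⟪J z X, Y⟫_ℝ = ⟪z, br X Y⟫_ℝ) (z : W) (X : V) :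
    ⟪J z X, X⟫_ℝ = 0 := by
  rw [hJ, hbr, inner_zero_right]

theorem norm_J_sq (hbr : ∀ X : V, br X X = 0)
    (hJ : ∀ (z : W) (X Y : V), ⟪J z X, Y⟫_ℝ = ⟪z, br X Y⟫_ℝ)
    (hH : ∀ (z : W) (X : V), J z (J z X) = (-16 * ‖z‖^2) • X) (z : W) (X : V) :
    ‖J z X‖ ^ 2 = 16 * ‖z‖ ^ 2 * ‖X‖ ^ 2 := by
  have hskew : ⟪J z (J z X), X⟫_ℝ = -⟪J z X, J z X⟫_ℝ := by
    rw [hJ, bracket_swap hbr, inner_neg_right, hJ]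
  rw [hH, real_inner_smul_left, real_inner_self_eq_norm_sq, real_inner_self_eq_norm_sq] at hskew
  linarith

theorem sum_norm_bracket_sq [FiniteDimensional ℝ W] {ι : Type*} [Fintype ι]
    (hbr : ∀ X : V, br X X = 0)
    (hJ : ∀ (z : W) (X Y : V), ⟪J z X, Y⟫_ℝ = ⟪z, br X Y⟫_ℝ)
    (hH : ∀ (z : W) (X : V), J z (J z X) = (-16 * ‖z‖^2) • X)
    (S : OrthonormalBasis ι ℝ V) (X : V) :
    ∑ j, ‖br X (S j)‖ ^ 2 = 16 * Module.finrank ℝ W * ‖X‖ ^ 2 := by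
  set T := stdOrthonormalBasis ℝ W
  calc ∑ j, ‖br X (S j)‖ ^ 2 = ∑ j, ∑ i, ⟪J (T i) X, S j⟫_ℝ ^ 2 := by
        simp only [hJ, T.sum_sq_inner_right]
    _ = ∑ i, ‖J (T i) X‖ ^ 2 := by
        rw [Finset.sum_comm]; simp only [S.sum_sq_inner_left]
    _ = 16 * Module.finrank ℝ W * ‖X‖ ^ 2 := by
        simp [norm_J_sq hbr hJ hH, T.orthonormal.1 _, Finset.sum_const]
        ring

end HType

section Gauge

variable {V W : Type*} [NormedAddCommGroup V] [NormedAddCommGroup W]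

theorem Kfun_pos {x : V × W} (hx : x ≠ 0) : 0 < Kfun x := by
  rcases eq_or_ne x.1 0 with h1 | h1
  · have h2 : x.2 ≠ 0 := fun h2 => hx (Prod.ext h1 h2)
    simp [Kfun, h1, h2]
  · unfold Kfun; positivity

theorem Kfun_mem_slitPlane {x : V × W} (hx : x ≠ 0) : (Kfun x : ℂ) ∈ Complex.slitPlane :=
  Complex.ofReal_mem_slitPlane.2 (Kfun_pos hx)

variable [InnerProductSpace ℝ V] [InnerProductSpace ℝ W]

theorem contDiff_normSq {n : WithTop ℕ∞} : ContDiff ℝ n fun y : V × W => (‖y.1‖ : ℂ) ^ 2 := by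
  have h := Complex.ofRealCLM.contDiff.comp ((contDiff_norm_sq ℝ).comp (contDiff_fst (𝕜 := ℝ)
    (E := V) (F := W)) (n := n))
  convert h using 1
  funext y; simp

theorem contDiff_Kfun {n : WithTop ℕ∞} : ContDiff ℝ n fun y : V × W => (Kfun y : ℂ) := by
  have h := Complex.ofRealCLM.contDiff.comp ((((contDiff_norm_sq ℝ).comp contDiff_fst).pow 2).add
    ((contDiff_norm_sq ℝ).comp contDiff_snd) (n := n) (f := fun y : V × W => (‖y.1‖ ^ 2) ^ 2))
  convert h using 1
  funext y; simp [Kfun]; ring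

theorem contDiffAt_Ks {n : WithTop ℕ∞} (t : ℂ) {x : V × W} (hx : x ≠ 0) :
    ContDiffAt ℝ n (Ks t) x :=
  ((analyticAt_id.cpow analyticAt_const (Kfun_mem_slitPlane hx)).contDiffAt.restrict_scalars ℝ).comp
    x contDiff_Kfun.contDiffAt

variable (br : V →ₗ[ℝ] V →ₗ[ℝ] W) (S : V)

theorem vfV_normSq : vfV br S (fun y : V × W => (‖y.1‖ : ℂ) ^ 2) =
      fun x : V × W => 2 * (⟪x.1, S⟫_ℝ : ℂ) := by
  funext x
  have h : HasFDerivAt (fun y : V × W => ‖y.1‖ ^ 2) _ x := hasFDerivAt_fst.norm_sq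
  have hcast : (fun y : V × W => (‖y.1‖ : ℂ) ^ 2) = fun y => ((‖y.1‖ ^ 2 : ℝ) : ℂ) := by
    push_cast; rfl
  rw [hcast, vfV_ofReal br S h.differentiableAt, h.fderiv]
  simp

theorem vfV_vfV_normSq (x : V × W) :
    vfV br S (vfV br S fun y : V × W => (‖y.1‖ : ℂ) ^ 2) x = 2 * ‖S‖ ^ 2 := by
  have h : HasFDerivAt (fun y : V × W => 2 * ⟪y.1, S⟫_ℝ) _ x :=
    (hasFDerivAt_fst.inner ℝ (hasFDerivAt_const S x)).const_mul 2
  have hcast : (fun y : V × W => 2 * (⟪y.1, S⟫_ℝ : ℂ)) = fun y => ((2 * ⟪y.1, S⟫_ℝ : ℝ) : ℂ) := by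
    push_cast; rfl
  rw [vfV_normSq, hcast, vfV_ofReal br S h.differentiableAt, h.fderiv]
  simp

theorem vfV_Kfun (hbr : ∀ X : V, br X X = 0) :
    vfV br S (fun y : V × W => (Kfun y : ℂ)) =
      fun x => ((4 * ‖x.1‖ ^ 2 * ⟪x.1, S⟫_ℝ + ⟪x.2, br x.1 S⟫_ℝ : ℝ) : ℂ) := by
  funext x
  have hK : (Kfun : V × W → ℝ) = fun y => (‖y.1‖ ^ 2) ^ 2 + ‖y.2‖ ^ 2 := by
    funext y; rw [Kfun]; ring
  have h := ((hasFDerivAt_fst (𝕜 := ℝ) (p := x)).norm_sq.pow 2).fun_add hasFDerivAt_snd.norm_sq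
  rw [← hK] at h
  rw [vfV_ofReal br S h.differentiableAt, h.fderiv]
  simp [bracket_swap hbr x.1 S]
  ring

theorem vfV_vfV_Kfun [FiniteDimensional ℝ V] (hbr : ∀ X : V, br X X = 0) (x : V × W) :
    vfV br S (vfV br S fun y : V × W => (Kfun y : ℂ)) x =
      ((8 * ⟪x.1, S⟫_ℝ ^ 2 + 4 * ‖x.1‖ ^ 2 * ‖S‖ ^ 2 + 2⁻¹ * ‖br x.1 S‖ ^ 2 : ℝ) : ℂ) := by
  have hL : HasFDerivAt (fun y : V × W => br y.1 S)
      ((LinearMap.toContinuousLinearMap (br.flip S)).comp (ContinuousLinearMap.fst ℝ V W)) x :=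
    ((LinearMap.toContinuousLinearMap (br.flip S)).comp
      (ContinuousLinearMap.fst ℝ V W)).hasFDerivAt
  have h : HasFDerivAt (fun y : V × W => 4 * ‖y.1‖ ^ 2 * ⟪y.1, S⟫_ℝ + ⟪y.2, br y.1 S⟫_ℝ) _ x :=
    (((hasFDerivAt_fst.norm_sq.const_mul 4).fun_mul
      (hasFDerivAt_fst.inner ℝ (hasFDerivAt_const S x))).fun_add (hasFDerivAt_snd.inner ℝ hL))
  rw [vfV_Kfun br S hbr, vfV_ofReal br S h.differentiableAt, h.fderiv]
  simp [bracket_swap hbr x.1 S, hbr, real_inner_smul_left]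
  ring

end Gauge

section Sums

variable {V W ι : Type*} [NormedAddCommGroup V] [InnerProductSpace ℝ V]
    [NormedAddCommGroup W] [InnerProductSpace ℝ W] [Fintype ι]
    {br : V →ₗ[ℝ] V →ₗ[ℝ] W} {J : W →ₗ[ℝ] V →ₗ[ℝ] V} (S : OrthonormalBasis ι ℝ V)

def horizGradK (J : W →ₗ[ℝ] V →ₗ[ℝ] V) (x : V × W) : V := (4 * ‖x.1‖ ^ 2) • x.1 + J x.2 x.1

theorem inner_horizGradK (hJ : ∀ (z : W) (X Y : V), ⟪J z X, Y⟫_ℝ = ⟪z, br X Y⟫_ℝ)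
    (x : V × W) (Y : V) :
    ⟪horizGradK J x, Y⟫_ℝ = 4 * ‖x.1‖ ^ 2 * ⟪x.1, Y⟫_ℝ + ⟪x.2, br x.1 Y⟫_ℝ := by
  rw [horizGradK, inner_add_left, real_inner_smul_left, hJ]

theorem norm_horizGradK_sq (hbr : ∀ X : V, br X X = 0)
    (hJ : ∀ (z : W) (X Y : V), ⟪J z X, Y⟫_ℝ = ⟪z, br X Y⟫_ℝ)
    (hH : ∀ (z : W) (X : V), J z (J z X) = (-16 * ‖z‖^2) • X) (x : V × W) :
    ‖horizGradK J x‖ ^ 2 = 16 * ‖x.1‖ ^ 2 * Kfun x := by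
  rw [horizGradK, norm_add_sq_real, norm_J_sq hbr hJ hH, real_inner_smul_left, real_inner_comm,
    inner_J_self hbr hJ, norm_smul, Kfun, Real.norm_of_nonneg (by positivity)]
  ring

theorem subLap_normSq (x : V × W) :
    subLap br Finset.univ S (fun y : V × W => (‖y.1‖ : ℂ) ^ 2) x = 2 * Fintype.card ι := by
  simp [subLap, vfV_vfV_normSq, S.orthonormal.1, mul_comm]

theorem subLap_Kfun [FiniteDimensional ℝ V] [FiniteDimensional ℝ W] (hbr : ∀ X : V, br X X = 0)
    (hJ : ∀ (z : W) (X Y : V), ⟪J z X, Y⟫_ℝ = ⟪z, br X Y⟫_ℝ)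
    (hH : ∀ (z : W) (X : V), J z (J z X) = (-16 * ‖z‖^2) • X) (x : V × W) :
    subLap br Finset.univ S (fun y : V × W => (Kfun y : ℂ)) x =
      (8 + 4 * Fintype.card ι + 8 * Module.finrank ℝ W) * (‖x.1‖ : ℂ) ^ 2 := by
  have h : ∑ j, (8 * ⟪x.1, S j⟫_ℝ ^ 2 + 4 * ‖x.1‖ ^ 2 * ‖S j‖ ^ 2 + 2⁻¹ * ‖br x.1 (S j)‖ ^ 2) =
      (8 + 4 * Fintype.card ι + 8 * Module.finrank ℝ W) * ‖x.1‖ ^ 2 := by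
    simp only [Finset.sum_add_distrib, ← Finset.mul_sum, S.sum_sq_inner_left,
      sum_norm_bracket_sq hbr hJ hH, S.orthonormal.1, one_pow, mul_one, Finset.sum_const,
      Finset.card_univ, nsmul_eq_mul]
    ring
  simp only [subLap, vfV_vfV_Kfun br _ hbr, ← Complex.ofReal_sum, h]
  push_cast
  ring

theorem carreDuChamp_normSq_Kfun (hbr : ∀ X : V, br X X = 0)
    (hJ : ∀ (z : W) (X Y : V), ⟪J z X, Y⟫_ℝ = ⟪z, br X Y⟫_ℝ) (x : V × W) :
    carreDuChamp br Finset.univ S (fun y : V × W => (‖y.1‖ : ℂ) ^ 2)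
      (fun y : V × W => (Kfun y : ℂ)) x = 8 * (‖x.1‖ : ℂ) ^ 4 := by
  have hXG : ⟪x.1, horizGradK J x⟫_ℝ = 4 * ‖x.1‖ ^ 4 := by
    rw [horizGradK, inner_add_right, real_inner_smul_right, real_inner_self_eq_norm_sq,
      real_inner_comm, inner_J_self hbr hJ]
    ring
  have h : ∑ j, 2 * ⟪x.1, S j⟫_ℝ * ⟪horizGradK J x, S j⟫_ℝ = 8 * ‖x.1‖ ^ 4 := by
    calc ∑ j, 2 * ⟪x.1, S j⟫_ℝ * ⟪horizGradK J x, S j⟫_ℝ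
        = 2 * ∑ j, ⟪x.1, S j⟫_ℝ * ⟪S j, horizGradK J x⟫_ℝ := by
          rw [Finset.mul_sum]
          exact Finset.sum_congr rfl fun j _ => by rw [real_inner_comm (horizGradK J x) (S j)]; ring
      _ = 8 * ‖x.1‖ ^ 4 := by rw [S.sum_inner_mul_inner, hXG]; ring
  simp only [carreDuChamp, vfV_normSq, vfV_Kfun br _ hbr, ← inner_horizGradK hJ]
  exact_mod_cast h

theorem carreDuChamp_Kfun_Kfun (hbr : ∀ X : V, br X X = 0)
    (hJ : ∀ (z : W) (X Y : V), ⟪J z X, Y⟫_ℝ = ⟪z, br X Y⟫_ℝ)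
    (hH : ∀ (z : W) (X : V), J z (J z X) = (-16 * ‖z‖^2) • X) (x : V × W) :
    carreDuChamp br Finset.univ S (fun y : V × W => (Kfun y : ℂ))
      (fun y : V × W => (Kfun y : ℂ)) x = 16 * (‖x.1‖ : ℂ) ^ 2 * Kfun x := by
  have h : ∑ j, ⟪horizGradK J x, S j⟫_ℝ * ⟪horizGradK J x, S j⟫_ℝ = 16 * ‖x.1‖ ^ 2 * Kfun x := by
    simp only [← sq, S.sum_sq_inner_left, norm_horizGradK_sq hbr hJ hH]
  simp only [carreDuChamp, vfV_Kfun br _ hbr, ← inner_horizGradK hJ]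
  exact_mod_cast h

end Sums

theorem subLap_Ks {V W ι : Type*} [NormedAddCommGroup V] [InnerProductSpace ℝ V]
    [NormedAddCommGroup W] [InnerProductSpace ℝ W] [FiniteDimensional ℝ V] [FiniteDimensional ℝ W]
    [Fintype ι] {br : V →ₗ[ℝ] V →ₗ[ℝ] W} {J : W →ₗ[ℝ] V →ₗ[ℝ] V} (hbr : ∀ X : V, br X X = 0)
    (hJ : ∀ (z : W) (X Y : V), ⟪J z X, Y⟫_ℝ = ⟪z, br X Y⟫_ℝ)
    (hH : ∀ (z : W) (X : V), J z (J z X) = (-16 * ‖z‖^2) • X)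
    (S : OrthonormalBasis ι ℝ V) (t : ℂ) {x : V × W} (hx : x ≠ 0) :
    subLap br Finset.univ S (Ks t) x =
      Bc (Fintype.card ι) (Module.finrank ℝ W) t * ((‖x.1‖ : ℂ) ^ 2 * Ks (t - 1) x) := by
  have hK : (Kfun x : ℂ) ^ (t - 2) * Kfun x = (Kfun x : ℂ) ^ (t - 1) := by
    rw [show t - 1 = t - 2 + 1 by ring,
      Complex.cpow_add _ _ (by exact_mod_cast (Kfun_pos hx).ne'), Complex.cpow_one]
  unfold Ks
  rw [subLap_cpow br _ _ t contDiff_Kfun.contDiffAt (Kfun_mem_slitPlane hx),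
    subLap_Kfun S hbr hJ hH, carreDuChamp_Kfun_Kfun S hbr hJ hH, Bc, rhoC]
  linear_combination (16 * t * (t - 1) * (‖x.1‖ : ℂ) ^ 2) * hK

theorem deltaSqKs_general {V W : Type*} [NormedAddCommGroup V] [InnerProductSpace ℝ V]
    [NormedAddCommGroup W] [InnerProductSpace ℝ W]
    [FiniteDimensional ℝ V] [FiniteDimensional ℝ W]
    (p q : ℕ) (hq : Module.finrank ℝ W = q)
    (br : V →ₗ[ℝ] V →ₗ[ℝ] W) (hbr : ∀ X : V, br X X = 0)
    (J : W →ₗ[ℝ] V →ₗ[ℝ] V)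
    (hJ : ∀ (z : W) (X Y : V), ⟪J z X, Y⟫_ℝ = ⟪z, br X Y⟫_ℝ)
    (hH : ∀ (z : W) (X : V), J z (J z X) = (-16 * ‖z‖^2) • X)
    (S : OrthonormalBasis (Fin p) ℝ V)
    (s : ℂ) :
    ∀ x : V × W, x ≠ 0 →
      subLap br Finset.univ (fun j => S j) (subLap br Finset.univ (fun j => S j) (Ks s)) x
        = Bc p q s * (2*(p : ℂ) * Ks (s-1) x
            + (Bc p q (s-1) + 16*(s-1)) * (‖x.1‖ : ℂ)^4 * Ks (s-2) x) := by
  intro x hx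
  have hΔ : subLap br Finset.univ S (Ks s) =ᶠ[𝓝 x]
      fun y => Bc p q s * ((‖y.1‖ : ℂ) ^ 2 * Ks (s - 1) y) :=
    (eventually_ne_nhds hx).mono fun y hy => by
      rw [subLap_Ks hbr hJ hH S s hy, Fintype.card_fin, hq]
  have hΓ := carreDuChamp_cpow_right br Finset.univ S (f := fun y : V × W => (‖y.1‖ : ℂ) ^ 2)
    (s - 1) ((contDiff_Kfun (n := 1)).contDiffAt.differentiableAt one_ne_zero)
    (Kfun_mem_slitPlane hx)
  rw [hΔ.subLap_eq, subLap_const_mul, subLap_mul br _ _ contDiff_normSq.contDiffAt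
    (contDiffAt_Ks _ hx), subLap_normSq, subLap_Ks hbr hJ hH S _ hx]
  unfold Ks
  rw [hΓ, carreDuChamp_normSq_Kfun S hbr hJ, Fintype.card_fin, hq, show s - 1 - 1 = s - 2 by ring]
  ring

/-- `Δ² K_s = B(s) (2p K_{s-1} + (B(s-1) + 16(s-1)) |X|⁴ K_{s-2})`
on `(𝔳 × 𝔷) ∖ {(0,0)}`. -/
theorem deltaSqKs {V W : Type*} [NormedAddCommGroup V] [InnerProductSpace ℝ V]
    [NormedAddCommGroup W] [InnerProductSpace ℝ W]
    [FiniteDimensional ℝ V] [FiniteDimensional ℝ W]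
    (p q : ℕ) (hp : Module.finrank ℝ V = p) (hq : Module.finrank ℝ W = q)
    (br : V →ₗ[ℝ] V →ₗ[ℝ] W) (hbr : ∀ X : V, br X X = 0)
    (J : W →ₗ[ℝ] V →ₗ[ℝ] V)
    (hJ : ∀ (z : W) (X Y : V), ⟪J z X, Y⟫_ℝ = ⟪z, br X Y⟫_ℝ)
    (hH : ∀ (z : W) (X : V), J z (J z X) = (-16 * ‖z‖^2) • X)
    (S : OrthonormalBasis (Fin p) ℝ V)
    (T : OrthonormalBasis (Fin q) ℝ W)
    (s : ℂ) :
    ∀ x : V × W, x ≠ 0 →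
      subLap br Finset.univ (fun j => S j) (subLap br Finset.univ (fun j => S j) (Ks s)) x
        = Bc p q s * (2*(p : ℂ) * Ks (s-1) x
            + (Bc p q (s-1) + 16*(s-1)) * (‖x.1‖ : ℂ)^4 * Ks (s-2) x) :=
  deltaSqKs_general p q hq br hbr J hJ hH S s
end
end

section
/- Let k ∈ ℕ and ν ∈ ℂ be such that D_{−ν/2,k} is defined, and set 𝒟_{ν,k} = R ∘ D_{−ν/2,k}, mapping smooth functions on N to smooth functions on N₁. Then 𝒟_{ν,k} intertwines π_ν restricted to N₁ ⋊ ℝ₊ with π^♭_{ν+2k}: for every smooth function f on N, every n₁ ∈ N₁ and every t > 0 one has 𝒟_{ν,k}(π_ν(n₁)f) = π^♭_{ν+2k}(n₁)(𝒟_{ν,k}f) and 𝒟_{ν,k}(π_ν(t)f) = π^♭_{ν+2k}(t)(𝒟_{ν,k}f). -/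
open scoped InnerProductSpace

noncomputable section

/-- The recursively defined family of differential operators `D_{s,k}`, built from
abstract operators `Lap = Δ`, `Lap2 = Δ₂`, `Box = □` and the constants
`ρ`, `ρ₁`, `q`, `p₂` (as complex numbers).  The first argument is `k`, the
second is `s`. -/
def Dop {α : Type*} (Lap Lap2 Box : (α → ℂ) → (α → ℂ)) (ρ ρ₁ qc p₂c : ℂ) :
    ℕ → ℂ → (α → ℂ) → (α → ℂ)
  | 0, _, f => f
  | 1, s, f => fun x =>
      (8*s*(4*s + 2*ρ - 2)*(2*s + qc - 1))⁻¹ *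
        ((4*s + 2*ρ - 2) * Lap2 f x - p₂c * Lap f x)
  | (k+2), s, f => fun x =>
      (8*(s - ((k : ℂ)+1))*(4*s + 2*ρ - 2)*(2*s + qc - 2*((k : ℂ)+1) - 1))⁻¹ *
        (((4*s + 2*ρ - 2) * Lap2 (Dop Lap Lap2 Box ρ ρ₁ qc p₂c (k+1) s f) x
            - (4*((k : ℂ)+1) + p₂c) * Lap (Dop Lap Lap2 Box ρ ρ₁ qc p₂c (k+1) s f) x)
          - (2*((k : ℂ)+1)*(2*((k : ℂ)+1) + p₂c - 2)*(4*s + 2*ρ₁ - 4*((k : ℂ)+1) - 2)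
              / (2*(4*s*(4*s + 2*ρ - 2))*(2*s + qc - 1)*(4*s + 2*ρ - 4)))
            * (Lap (Lap (Dop Lap Lap2 Box ρ ρ₁ qc p₂c k (s-1) f)) x
                + 4*(4*s + 2*ρ - 2)^2 * Box (Dop Lap Lap2 Box ρ ρ₁ qc p₂c k (s-1) f) x))

/-- The condition that all denominators occurring in the recursion defining `D_{s,k}`
(including those for the recursively used operators) are nonzero. -/
def Ddef (ρ qc : ℂ) : ℕ → ℂ → Prop
  | 0, _ => True
  | 1, s => 8*s*(4*s + 2*ρ - 2)*(2*s + qc - 1) ≠ 0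
  | (k+2), s =>
      8*(s - ((k : ℂ)+1))*(4*s + 2*ρ - 2)*(2*s + qc - 2*((k : ℂ)+1) - 1) ≠ 0 ∧
      2*(4*s*(4*s + 2*ρ - 2))*(2*s + qc - 1)*(4*s + 2*ρ - 4) ≠ 0 ∧
      Ddef ρ qc (k+1) s ∧ Ddef ρ qc k (s-1)

/-- `ρ₁ = (p₁+2q)/2` as a complex number. -/
def rho1C (p₁ q : ℕ) : ℂ := ((p₁ : ℂ) + 2*q)/2

/-- Left translation `π_ν(n)f(n') = f(n⁻¹·n')` on `N = 𝔳 × 𝔷` by the element `n = (A,C)`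
(the formula does not depend on `ν`). -/
def Ntrans {V W : Type*} [NormedAddCommGroup V] [InnerProductSpace ℝ V]
    [NormedAddCommGroup W] [InnerProductSpace ℝ W]
    (br : V →ₗ[ℝ] V →ₗ[ℝ] W) (A : V) (C : W) (f : V × W → ℂ) : V × W → ℂ :=
  fun x => f (x.1 - A, x.2 - C - (1/2 : ℝ) • br A x.1)

/-- Left translation on `N₁ = 𝔳₁ × 𝔷` by the element `n₁ = (A,C)`, `A ∈ 𝔳₁`. -/
def N1trans {V W : Type*} [NormedAddCommGroup V] [InnerProductSpace ℝ V]
    [NormedAddCommGroup W] [InnerProductSpace ℝ W]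
    (br : V →ₗ[ℝ] V →ₗ[ℝ] W) (V₁ : Submodule ℝ V) (A : V₁) (C : W)
    (g : V₁ × W → ℂ) : V₁ × W → ℂ :=
  fun y => g (y.1 - A, y.2 - C - (1/2 : ℝ) • br (A : V) (y.1 : V))

/-- Dilation part of the representation: `π_ν(t)f(X,Z) = t^{-ν} f(t⁻¹X, t⁻²Z)`. -/
def Ndil {V W : Type*} [NormedAddCommGroup V] [NormedSpace ℝ V]
    [NormedAddCommGroup W] [NormedSpace ℝ W]
    (ν : ℂ) (t : ℝ) (f : V × W → ℂ) : V × W → ℂ :=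
  fun x => (t : ℂ)^(-ν) * f (t⁻¹ • x.1, ((t^2)⁻¹ : ℝ) • x.2)

/-- The restriction operator `R` from functions on `N = 𝔳 × 𝔷` to functions
on `N₁ = 𝔳₁ × 𝔷`. -/
def Rop {V W : Type*} [NormedAddCommGroup V] [InnerProductSpace ℝ V]
    [NormedAddCommGroup W] [InnerProductSpace ℝ W]
    (V₁ : Submodule ℝ V) (f : V × W → ℂ) : V₁ × W → ℂ :=
  fun y => f ((y.1 : V), y.2)


section IntertwineHelpers

set_option linter.unusedSectionVars false
set_option maxHeartbeats 2000000

variable {V W : Type*} [NormedAddCommGroup V] [InnerProductSpace ℝ V]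
  [NormedAddCommGroup W] [InnerProductSpace ℝ W]
  [FiniteDimensional ℝ V] [FiniteDimensional ℝ W]
  (br : V →ₗ[ℝ] V →ₗ[ℝ] W)

lemma br_anti (hbr : ∀ X : V, br X X = 0) (a b : V) : br a b = - br b a := by
  have h := hbr (a + b)
  simp only [map_add, LinearMap.add_apply, hbr] at h
  have h2 : br b a + br a b = 0 := by simpa [hbr] using h
  exact eq_neg_of_add_eq_zero_right h2

/-! ### Smoothness -/

lemma vfV_contDiff (S : V) {f : V × W → ℂ} (hf : ContDiff ℝ (⊤ : ℕ∞) f) :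
    ContDiff ℝ (⊤ : ℕ∞) (vfV br S f) := by
  have h1 : ContDiff ℝ (⊤ : ℕ∞) (fun x : V × W => fderiv ℝ f x (S, 0)) :=
    (hf.fderiv_right (by simp)).clm_apply contDiff_const
  have h2 : ContDiff ℝ (⊤ : ℕ∞) (fun x : V × W => fderiv ℝ f x (0, br S x.1)) :=
    (hf.fderiv_right (by simp)).clm_apply
      (contDiff_const.prodMk (((br S).toContinuousLinearMap.contDiff).comp contDiff_fst))
  exact h1.sub (contDiff_const.mul h2)

lemma vfW_contDiff (T : W) {f : V × W → ℂ} (hf : ContDiff ℝ (⊤ : ℕ∞) f) :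
    ContDiff ℝ (⊤ : ℕ∞) (vfW T f) :=
  (hf.fderiv_right (by simp)).clm_apply contDiff_const

lemma subLap_contDiff {ι : Type*} (fs : Finset ι) (S : ι → V) {f : V × W → ℂ}
    (hf : ContDiff ℝ (⊤ : ℕ∞) f) : ContDiff ℝ (⊤ : ℕ∞) (subLap br fs S f) :=
  ContDiff.sum fun j _ => vfV_contDiff br (S j) (vfV_contDiff br (S j) hf)

lemma boxLap_contDiff {κ : Type*} (fs : Finset κ) (T : κ → W) {f : V × W → ℂ}
    (hf : ContDiff ℝ (⊤ : ℕ∞) f) : ContDiff ℝ (⊤ : ℕ∞) (boxLap fs T f) :=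
  ContDiff.sum fun j _ => vfW_contDiff (T j) (vfW_contDiff (T j) hf)

/-! ### Translations -/

def trCLM (A : V) : (V × W) →L[ℝ] (V × W) :=
  LinearMap.toContinuousLinearMap
    ((LinearMap.fst ℝ V W).prod
      ((LinearMap.snd ℝ V W) - ((1/2 : ℝ) • ((br A).comp (LinearMap.fst ℝ V W)))))

lemma trCLM_apply (A : V) (v : V × W) :
    trCLM br A v = (v.1, v.2 - (1/2 : ℝ) • br A v.1) := rfl

lemma hasFDerivAt_ntrans {f : V × W → ℂ} (hf : ContDiff ℝ (⊤ : ℕ∞) f) (A : V) (C : W) (x : V × W) :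
    HasFDerivAt (Ntrans br A C f)
      ((fderiv ℝ f (x.1 - A, x.2 - C - (1/2 : ℝ) • br A x.1)).comp (trCLM br A)) x := by
  have heq : (fun y : V × W => trCLM br A y + (-A, -C)) =
      fun y : V × W => (y.1 - A, y.2 - C - (1/2 : ℝ) • br A y.1) := by
    funext y
    rw [trCLM_apply]
    ext
    · simp [sub_eq_add_neg]
    · simp only [Prod.snd_add, Prod.mk.injEq]
      abel
  have h0 : HasFDerivAt (fun y : V × W => (y.1 - A, y.2 - C - (1/2 : ℝ) • br A y.1))
      (trCLM br A) x := heq ▸ ((trCLM br A).hasFDerivAt.add_const (-A, -C))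
  have hfd : HasFDerivAt f (fderiv ℝ f (x.1 - A, x.2 - C - (1/2 : ℝ) • br A x.1))
      (x.1 - A, x.2 - C - (1/2 : ℝ) • br A x.1) :=
    (hf.differentiable (by simp) _).hasFDerivAt
  exact hfd.comp x h0

lemma fderiv_ntrans {f : V × W → ℂ} (hf : ContDiff ℝ (⊤ : ℕ∞) f) (A : V) (C : W) (x v : V × W) :
    fderiv ℝ (Ntrans br A C f) x v
      = fderiv ℝ f (x.1 - A, x.2 - C - (1/2 : ℝ) • br A x.1)
          (v.1, v.2 - (1/2 : ℝ) • br A v.1) := by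
  rw [(hasFDerivAt_ntrans br hf A C x).fderiv]; rfl

lemma vfV_ntrans (hbr : ∀ X : V, br X X = 0) (S : V) (A : V) (C : W) {f : V × W → ℂ}
    (hf : ContDiff ℝ (⊤ : ℕ∞) f) :
    vfV br S (Ntrans br A C f) = Ntrans br A C (vfV br S f) := by
  funext x
  set pt : V × W := (x.1 - A, x.2 - C - (1/2 : ℝ) • br A x.1) with hpt
  have hsplit : ∀ (a : V) (b : W),
      fderiv ℝ f pt (a, b) = fderiv ℝ f pt (a, 0) + fderiv ℝ f pt ((0 : V), b) := by
    intro a b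
    rw [← ContinuousLinearMap.map_add]
    norm_num [Prod.mk_add_mk]
  have hsm : ∀ (b : W) (r : ℝ),
      fderiv ℝ f pt ((0 : V), r • b) = (r : ℂ) * fderiv ℝ f pt ((0 : V), b) := by
    intro b r
    have h : ((0 : V), r • b) = r • ((0 : V), b) := by simp [Prod.smul_mk]
    rw [h, ContinuousLinearMap.map_smul, Complex.real_smul]
  show fderiv ℝ (Ntrans br A C f) x (S, 0)
      - (1/2 : ℂ) * fderiv ℝ (Ntrans br A C f) x ((0 : V), br S x.1)
      = vfV br S f pt
  rw [fderiv_ntrans br hf, fderiv_ntrans br hf]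
  show fderiv ℝ f pt (S, 0 - (1/2 : ℝ) • br A S)
      - (1/2 : ℂ) * fderiv ℝ f pt ((0 : V), br S x.1 - (1/2 : ℝ) • br A 0)
      = vfV br S f pt
  rw [br_anti br hbr A S]
  have h1 : (0 : W) - (1/2 : ℝ) • (-(br S A)) = (1/2 : ℝ) • br S A := by
    simp
  rw [h1, hsplit S ((1/2 : ℝ) • br S A), hsm (br S A) (1/2 : ℝ)]
  have h2 : ((0 : V), br S x.1 - (1/2 : ℝ) • br A 0) = ((0 : V), br S x.1) := by simp
  rw [h2]
  show _ = fderiv ℝ f pt (S, 0) - (1/2 : ℂ) * fderiv ℝ f pt ((0 : V), br S pt.1)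
  have h3 : br S pt.1 = br S x.1 - br S A := by
    simp [hpt, map_sub]
  rw [h3]
  have h4 : ((0 : V), br S x.1 - br S A) = ((0 : V), br S x.1) - ((0 : V), br S A) := by
    simp [Prod.mk_sub_mk]
  rw [h4, ContinuousLinearMap.map_sub]
  push_cast
  ring

lemma vfW_ntrans (T : W) (A : V) (C : W) {f : V × W → ℂ} (hf : ContDiff ℝ (⊤ : ℕ∞) f) :
    vfW T (Ntrans br A C f) = Ntrans br A C (vfW T f) := by
  funext x
  show fderiv ℝ (Ntrans br A C f) x ((0 : V), T) = _
  rw [fderiv_ntrans br hf]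
  simp [Ntrans, vfW]

lemma subLap_ntrans (hbr : ∀ X : V, br X X = 0) {ι : Type*} (fs : Finset ι) (S : ι → V)
    (A : V) (C : W) {f : V × W → ℂ} (hf : ContDiff ℝ (⊤ : ℕ∞) f) :
    subLap br fs S (Ntrans br A C f) = Ntrans br A C (subLap br fs S f) := by
  funext x
  show (∑ j ∈ fs, vfV br (S j) (vfV br (S j) (Ntrans br A C f)) x) = _
  have : ∀ j, vfV br (S j) (vfV br (S j) (Ntrans br A C f))
      = Ntrans br A C (vfV br (S j) (vfV br (S j) f)) := by
    intro j
    rw [vfV_ntrans br hbr (S j) A C hf, vfV_ntrans br hbr (S j) A C (vfV_contDiff br (S j) hf)]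
  simp only [this]
  rfl

lemma boxLap_ntrans {κ : Type*} (fs : Finset κ) (T : κ → W)
    (A : V) (C : W) {f : V × W → ℂ} (hf : ContDiff ℝ (⊤ : ℕ∞) f) :
    boxLap fs T (Ntrans br A C f) = Ntrans br A C (boxLap fs T f) := by
  funext x
  show (∑ j ∈ fs, vfW (T j) (vfW (T j) (Ntrans br A C f)) x) = _
  have : ∀ j, vfW (T j) (vfW (T j) (Ntrans br A C f))
      = Ntrans br A C (vfW (T j) (vfW (T j) f)) := by
    intro j
    rw [vfW_ntrans br (T j) A C hf, vfW_ntrans br (T j) A C (vfW_contDiff (T j) hf)]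
  simp only [this]
  rfl

end IntertwineHelpers


section IntertwineHelpers2

set_option linter.unusedSectionVars false
set_option maxHeartbeats 2000000

variable {V W : Type*} [NormedAddCommGroup V] [InnerProductSpace ℝ V]
  [NormedAddCommGroup W] [InnerProductSpace ℝ W]
  [FiniteDimensional ℝ V] [FiniteDimensional ℝ W]
  (br : V →ₗ[ℝ] V →ₗ[ℝ] W)

lemma clm_smul_fst (L : (V × W) →L[ℝ] ℂ) (r : ℝ) (a : V) :
    L (r • a, 0) = (r : ℂ) * L (a, 0) := by
  have h : ((r • a : V), (0 : W)) = r • ((a : V), (0 : W)) := by simp [Prod.smul_mk]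
  rw [h, ContinuousLinearMap.map_smul, Complex.real_smul]

lemma clm_smul_snd (L : (V × W) →L[ℝ] ℂ) (r : ℝ) (b : W) :
    L ((0 : V), r • b) = (r : ℂ) * L ((0 : V), b) := by
  have h : ((0 : V), r • b) = r • ((0 : V), (b : W)) := by simp [Prod.smul_mk]
  rw [h, ContinuousLinearMap.map_smul, Complex.real_smul]

def dilCLM (t : ℝ) : (V × W) →L[ℝ] (V × W) :=
  LinearMap.toContinuousLinearMap
    ((t⁻¹ • LinearMap.fst ℝ V W).prod (((t ^ 2)⁻¹ : ℝ) • LinearMap.snd ℝ V W))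

lemma dilCLM_apply (t : ℝ) (v : V × W) :
    dilCLM (V := V) (W := W) t v = (t⁻¹ • v.1, ((t ^ 2)⁻¹ : ℝ) • v.2) := rfl

lemma fderiv_ndil {f : V × W → ℂ} (hf : ContDiff ℝ (⊤ : ℕ∞) f) (μ : ℂ) (t : ℝ) (x v : V × W) :
    fderiv ℝ (Ndil μ t f) x v
      = (t : ℂ) ^ (-μ) * fderiv ℝ f (t⁻¹ • x.1, ((t ^ 2)⁻¹ : ℝ) • x.2)
          (t⁻¹ • v.1, ((t ^ 2)⁻¹ : ℝ) • v.2) := by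
  have h0 : HasFDerivAt (fun y : V × W => f (dilCLM (V := V) (W := W) t y))
      ((fderiv ℝ f (dilCLM (V := V) (W := W) t x)).comp (dilCLM (V := V) (W := W) t)) x :=
    ((hf.differentiable (by simp) _).hasFDerivAt).comp x
      (ContinuousLinearMap.hasFDerivAt (dilCLM (V := V) (W := W) t))
  have h1 := h0.const_mul ((t : ℂ) ^ (-μ))
  have hfun : Ndil μ t f = fun y : V × W => (t : ℂ) ^ (-μ) * f (dilCLM (V := V) (W := W) t y) := by
    funext y; rw [dilCLM_apply]; rfl
  rw [hfun, h1.fderiv]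
  simp [dilCLM_apply, smul_eq_mul]

lemma Ndil_congr {μ₁ μ₂ : ℂ} (h : μ₁ = μ₂) (t : ℝ) (g : V × W → ℂ) :
    Ndil μ₁ t g = Ndil μ₂ t g := by rw [h]

lemma cpow_negsucc {t : ℝ} (ht : (t : ℂ) ≠ 0) (μ : ℂ) :
    (t : ℂ) ^ (-(μ + 1)) = (t : ℂ) ^ (-μ) * ((t : ℂ))⁻¹ := by
  rw [show -(μ + 1) = -μ + (-1) by ring, Complex.cpow_add _ _ ht, Complex.cpow_neg_one]

lemma cpow_negtwo {t : ℝ} (ht : (t : ℂ) ≠ 0) (μ : ℂ) :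
    (t : ℂ) ^ (-(μ + 2)) = (t : ℂ) ^ (-μ) * (((t : ℂ)) ^ (2 : ℕ))⁻¹ := by
  have h2 : (t : ℂ) ^ (-(2 : ℂ)) = ((t : ℂ) ^ (2 : ℕ))⁻¹ := by
    rw [show (-(2 : ℂ)) = -((2 : ℕ) : ℂ) by norm_num, Complex.cpow_neg, Complex.cpow_natCast]
  rw [show -(μ + 2) = -μ + (-(2 : ℂ)) by ring, Complex.cpow_add _ _ ht, h2]

lemma vfV_ndil {t : ℝ} (ht : (t : ℂ) ≠ 0) (S : V) (μ : ℂ) {f : V × W → ℂ}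
    (hf : ContDiff ℝ (⊤ : ℕ∞) f) :
    vfV br S (Ndil μ t f) = Ndil (μ + 1) t (vfV br S f) := by
  funext x
  show fderiv ℝ (Ndil μ t f) x (S, 0)
      - (1/2 : ℂ) * fderiv ℝ (Ndil μ t f) x ((0 : V), br S x.1)
      = Ndil (μ + 1) t (vfV br S f) x
  rw [fderiv_ndil hf μ t x (S, 0), fderiv_ndil hf μ t x ((0 : V), br S x.1)]
  simp only [smul_zero]
  rw [clm_smul_fst, clm_smul_snd]
  show _ = (t : ℂ) ^ (-(μ + 1)) *
      (fderiv ℝ f (t⁻¹ • x.1, ((t ^ 2)⁻¹ : ℝ) • x.2) (S, 0)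
        - (1/2 : ℂ) * fderiv ℝ f (t⁻¹ • x.1, ((t ^ 2)⁻¹ : ℝ) • x.2)
            ((0 : V), br S (t⁻¹ • x.1)))
  rw [map_smul, clm_smul_snd, cpow_negsucc ht]
  push_cast
  ring

lemma vfW_ndil {t : ℝ} (ht : (t : ℂ) ≠ 0) (T : W) (μ : ℂ) {f : V × W → ℂ}
    (hf : ContDiff ℝ (⊤ : ℕ∞) f) :
    vfW T (Ndil μ t f) = Ndil (μ + 2) t (vfW T f) := by
  funext x
  show fderiv ℝ (Ndil μ t f) x ((0 : V), T) = Ndil (μ + 2) t (vfW T f) x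
  rw [fderiv_ndil hf μ t x ((0 : V), T)]
  simp only [smul_zero]
  rw [clm_smul_snd]
  show _ = (t : ℂ) ^ (-(μ + 2)) * fderiv ℝ f (t⁻¹ • x.1, ((t ^ 2)⁻¹ : ℝ) • x.2) ((0 : V), T)
  rw [cpow_negtwo ht]
  push_cast
  ring

lemma subLap_ndil {t : ℝ} (ht : (t : ℂ) ≠ 0) {ι : Type*} (fs : Finset ι) (Sv : ι → V)
    (μ : ℂ) {f : V × W → ℂ} (hf : ContDiff ℝ (⊤ : ℕ∞) f) :
    subLap br fs Sv (Ndil μ t f) = Ndil (μ + 2) t (subLap br fs Sv f) := by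
  funext x
  show (∑ j ∈ fs, vfV br (Sv j) (vfV br (Sv j) (Ndil μ t f)) x) = _
  have h : ∀ j, vfV br (Sv j) (vfV br (Sv j) (Ndil μ t f))
      = Ndil (μ + 2) t (vfV br (Sv j) (vfV br (Sv j) f)) := by
    intro j
    rw [vfV_ndil br ht (Sv j) μ hf, vfV_ndil br ht (Sv j) (μ + 1) (vfV_contDiff br (Sv j) hf),
      Ndil_congr (show μ + 1 + 1 = μ + 2 by ring)]
  simp only [h]
  simp [Ndil, subLap, Finset.mul_sum]

lemma boxLap_ndil {t : ℝ} (ht : (t : ℂ) ≠ 0) {κ : Type*} (fs : Finset κ) (Tv : κ → W)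
    (μ : ℂ) {f : V × W → ℂ} (hf : ContDiff ℝ (⊤ : ℕ∞) f) :
    boxLap fs Tv (Ndil μ t f) = Ndil (μ + 4) t (boxLap fs Tv f) := by
  funext x
  show (∑ j ∈ fs, vfW (Tv j) (vfW (Tv j) (Ndil μ t f)) x) = _
  have h : ∀ j, vfW (Tv j) (vfW (Tv j) (Ndil μ t f))
      = Ndil (μ + 4) t (vfW (Tv j) (vfW (Tv j) f)) := by
    intro j
    rw [vfW_ndil ht (Tv j) μ hf, vfW_ndil ht (Tv j) (μ + 2) (vfW_contDiff (Tv j) hf),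
      Ndil_congr (show μ + 2 + 2 = μ + 4 by ring)]
  simp only [h]
  simp [Ndil, boxLap, Finset.mul_sum]

end IntertwineHelpers2


section IntertwineHelpers3

set_option linter.unusedSectionVars false
set_option maxHeartbeats 4000000

variable {V W : Type*} [NormedAddCommGroup V] [InnerProductSpace ℝ V]
  [NormedAddCommGroup W] [InnerProductSpace ℝ W]
  [FiniteDimensional ℝ V] [FiniteDimensional ℝ W]
  (br : V →ₗ[ℝ] V →ₗ[ℝ] W)
  {ι κ : Type*} (fs1 fs2 : Finset ι) (Sv : ι → V) (fsb : Finset κ) (Tv : κ → W)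
  (ρ ρ₁ qc p₂c : ℂ)

lemma Dop_contDiff : ∀ (k : ℕ) (s : ℂ) {f : V × W → ℂ}, ContDiff ℝ (⊤ : ℕ∞) f →
    ContDiff ℝ (⊤ : ℕ∞) (Dop (subLap br fs1 Sv) (subLap br fs2 Sv) (boxLap fsb Tv)
      ρ ρ₁ qc p₂c k s f) := by
  intro k
  induction k using Nat.strong_induction_on with
  | _ k ih =>
    match k with
    | 0 => intro s f hf; exact hf
    | 1 =>
      intro s f hf
      simp only [Dop]
      exact contDiff_const.mul ((contDiff_const.mul (subLap_contDiff br fs2 Sv hf)).sub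
        (contDiff_const.mul (subLap_contDiff br fs1 Sv hf)))
    | (n + 2) =>
      intro s f hf
      simp only [Dop]
      have h1 := ih (n + 1) (by omega) s hf
      have h2 := ih n (by omega) (s - 1) hf
      exact contDiff_const.mul
        (((contDiff_const.mul (subLap_contDiff br fs2 Sv h1)).sub
          (contDiff_const.mul (subLap_contDiff br fs1 Sv h1))).sub
          (contDiff_const.mul ((subLap_contDiff br fs1 Sv (subLap_contDiff br fs1 Sv h2)).add
            (contDiff_const.mul (boxLap_contDiff fsb Tv h2)))))

lemma Dop_ntrans (hbr : ∀ X : V, br X X = 0) (A : V) (C : W) :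
    ∀ (k : ℕ) (s : ℂ) {f : V × W → ℂ}, ContDiff ℝ (⊤ : ℕ∞) f →
    Dop (subLap br fs1 Sv) (subLap br fs2 Sv) (boxLap fsb Tv) ρ ρ₁ qc p₂c k s
        (Ntrans br A C f)
      = Ntrans br A C
          (Dop (subLap br fs1 Sv) (subLap br fs2 Sv) (boxLap fsb Tv) ρ ρ₁ qc p₂c k s f) := by
  intro k
  induction k using Nat.strong_induction_on with
  | _ k ih =>
    match k with
    | 0 => intro s f hf; rfl
    | 1 =>
      intro s f hf
      simp only [Dop]
      rw [subLap_ntrans br hbr fs2 Sv A C hf, subLap_ntrans br hbr fs1 Sv A C hf]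
      funext x
      simp only [Ntrans]
    | (n + 2) =>
      intro s f hf
      have hD1 := Dop_contDiff br fs1 fs2 Sv fsb Tv ρ ρ₁ qc p₂c (n + 1) s hf
      have hD2 := Dop_contDiff br fs1 fs2 Sv fsb Tv ρ ρ₁ qc p₂c n (s - 1) hf
      simp only [Dop]
      rw [ih (n + 1) (by omega) s hf, ih n (by omega) (s - 1) hf,
        subLap_ntrans br hbr fs2 Sv A C hD1,
        subLap_ntrans br hbr fs1 Sv A C hD1,
        subLap_ntrans br hbr fs1 Sv A C hD2,
        subLap_ntrans br hbr fs1 Sv A C (subLap_contDiff br fs1 Sv hD2),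
        boxLap_ntrans br fsb Tv A C hD2]
      funext x
      simp only [Ntrans]

lemma Dop_ndil {t : ℝ} (ht : (t : ℂ) ≠ 0) (μ : ℂ) :
    ∀ (k : ℕ) (s : ℂ) {f : V × W → ℂ}, ContDiff ℝ (⊤ : ℕ∞) f →
    Dop (subLap br fs1 Sv) (subLap br fs2 Sv) (boxLap fsb Tv) ρ ρ₁ qc p₂c k s
        (Ndil μ t f)
      = Ndil (μ + 2 * (k : ℂ)) t
          (Dop (subLap br fs1 Sv) (subLap br fs2 Sv) (boxLap fsb Tv) ρ ρ₁ qc p₂c k s f) := by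
  intro k
  induction k using Nat.strong_induction_on with
  | _ k ih =>
    match k with
    | 0 =>
      intro s f hf
      show Ndil μ t f = _
      exact Ndil_congr (by push_cast; ring) t f
    | 1 =>
      intro s f hf
      simp only [Dop]
      rw [subLap_ndil br ht fs2 Sv μ hf, subLap_ndil br ht fs1 Sv μ hf,
        show (μ + 2 * ((1 : ℕ) : ℂ)) = μ + 2 by push_cast; ring]
      funext x
      simp only [Ndil]
      ring
    | (n + 2) =>
      intro s f hf
      have hD1 := Dop_contDiff br fs1 fs2 Sv fsb Tv ρ ρ₁ qc p₂c (n + 1) s hf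
      have hD2 := Dop_contDiff br fs1 fs2 Sv fsb Tv ρ ρ₁ qc p₂c n (s - 1) hf
      simp only [Dop]
      rw [ih (n + 1) (by omega) s hf, ih n (by omega) (s - 1) hf,
        subLap_ndil br ht fs2 Sv (μ + 2 * ((n + 1 : ℕ) : ℂ)) hD1,
        subLap_ndil br ht fs1 Sv (μ + 2 * ((n + 1 : ℕ) : ℂ)) hD1,
        subLap_ndil br ht fs1 Sv (μ + 2 * ((n : ℕ) : ℂ)) hD2,
        subLap_ndil br ht fs1 Sv (μ + 2 * ((n : ℕ) : ℂ) + 2) (subLap_contDiff br fs1 Sv hD2),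
        boxLap_ndil ht fsb Tv (μ + 2 * ((n : ℕ) : ℂ)) hD2,
        show (μ + 2 * ((n + 1 : ℕ) : ℂ) + 2) = μ + 2 * ((n + 2 : ℕ) : ℂ) by push_cast; ring,
        show (μ + 2 * ((n : ℕ) : ℂ) + 2 + 2) = μ + 2 * ((n + 2 : ℕ) : ℂ) by push_cast; ring,
        show (μ + 2 * ((n : ℕ) : ℂ) + 4) = μ + 2 * ((n + 2 : ℕ) : ℂ) by push_cast; ring]
      funext x
      simp only [Ndil]
      ring

end IntertwineHelpers3

/-- the operator `𝒟_{ν,k} = R ∘ D_{-ν/2,k}` intertwines `π_ν|_{N₁⋊ℝ₊}`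
with `π^♭_{ν+2k}`. -/
theorem DopIntertwines {V W : Type*} [NormedAddCommGroup V] [InnerProductSpace ℝ V]
    [NormedAddCommGroup W] [InnerProductSpace ℝ W]
    [FiniteDimensional ℝ V] [FiniteDimensional ℝ W]
    (p p₁ p₂ q : ℕ) (hp : Module.finrank ℝ V = p) (hq : Module.finrank ℝ W = q)
    (V₁ : Submodule ℝ V) (hp₁ : Module.finrank ℝ V₁ = p₁)
    (hp₂ : Module.finrank ℝ V₁ᗮ = p₂)
    (br : V →ₗ[ℝ] V →ₗ[ℝ] W) (hbr : ∀ X : V, br X X = 0)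
    (hbr12 : ∀ X ∈ V₁, ∀ Y ∈ V₁ᗮ, br X Y = 0)
    (J : W →ₗ[ℝ] V →ₗ[ℝ] V)
    (hJ : ∀ (z : W) (X Y : V), ⟪J z X, Y⟫_ℝ = ⟪z, br X Y⟫_ℝ)
    (hH : ∀ (z : W) (X : V), J z (J z X) = (-16 * ‖z‖^2) • X)
    (S : OrthonormalBasis (Fin p) ℝ V)
    (hS : ∀ j : Fin p, ((j : ℕ) < p₁ → S j ∈ V₁) ∧ (p₁ ≤ (j : ℕ) → S j ∈ V₁ᗮ))
    (T : OrthonormalBasis (Fin q) ℝ W)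
    (k : ℕ) (ν : ℂ) (hdef : Ddef (rhoC p q) (q : ℂ) k (-ν/2))
    (f : V × W → ℂ) (hf : ContDiff ℝ (⊤ : ℕ∞) f) :
    (∀ (A : V₁) (C : W),
        Rop V₁ (Dop (subLap br Finset.univ (fun j => S j))
            (subLap br (Finset.univ.filter fun j : Fin p => p₁ ≤ (j : ℕ)) (fun j => S j))
            (boxLap Finset.univ (fun j => T j))
            (rhoC p q) (rho1C p₁ q) (q : ℂ) (p₂ : ℂ) k (-ν/2) (Ntrans br (A : V) C f))
          = N1trans br V₁ A C
              (Rop V₁ (Dop (subLap br Finset.univ (fun j => S j))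
                (subLap br (Finset.univ.filter fun j : Fin p => p₁ ≤ (j : ℕ)) (fun j => S j))
                (boxLap Finset.univ (fun j => T j))
                (rhoC p q) (rho1C p₁ q) (q : ℂ) (p₂ : ℂ) k (-ν/2) f))) ∧
    (∀ t : ℝ, 0 < t →
        Rop V₁ (Dop (subLap br Finset.univ (fun j => S j))
            (subLap br (Finset.univ.filter fun j : Fin p => p₁ ≤ (j : ℕ)) (fun j => S j))
            (boxLap Finset.univ (fun j => T j))
            (rhoC p q) (rho1C p₁ q) (q : ℂ) (p₂ : ℂ) k (-ν/2) (Ndil ν t f))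
          = Ndil (ν + 2*k) t
              (Rop V₁ (Dop (subLap br Finset.univ (fun j => S j))
                (subLap br (Finset.univ.filter fun j : Fin p => p₁ ≤ (j : ℕ)) (fun j => S j))
                (boxLap Finset.univ (fun j => T j))
                (rhoC p q) (rho1C p₁ q) (q : ℂ) (p₂ : ℂ) k (-ν/2) f))) := by
  constructor
  · intro A C
    rw [Dop_ntrans br Finset.univ (Finset.univ.filter fun j : Fin p => p₁ ≤ (j : ℕ))
      (fun j => S j) Finset.univ (fun j => T j) (rhoC p q) (rho1C p₁ q) (q : ℂ) (p₂ : ℂ)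
      hbr (A : V) C k (-ν/2) hf]
    funext y
    simp [Rop, Ntrans, N1trans]
  · intro t ht
    have ht' : (t : ℂ) ≠ 0 := by
      simp only [ne_eq, Complex.ofReal_eq_zero]
      exact ht.ne'
    rw [Dop_ndil br Finset.univ (Finset.univ.filter fun j : Fin p => p₁ ≤ (j : ℕ))
      (fun j => S j) Finset.univ (fun j => T j) (rhoC p q) (rho1C p₁ q) (q : ℂ) (p₂ : ℂ)
      ht' ν k (-ν/2) hf]
    funext y
    simp [Rop, Ndil]
end
end

section
/- Suppose α, β ∈ ℝ satisfy α > −1, β ≥ 0 and β − α > 1. Then there exists a constant C > 0 such that for every integer q ≥ 0 one has Σ_{n=0}^∞ (n+1)^α / (n+q+1)^β ≤ C / (q+1)^{β−α−1} (in particular the series converges). -/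
/-!
Split the sum at `n = q`. For `n ≤ q` the denominator is at least `(q+1)^β`, and
`∑_{n ≤ q} (n+1)^α ≤ C (q+1)^(α+1)` because `α > -1` (telescoping the concavity bound for
`x^(α+1)` when `α ≤ 0`). For `n > q` the term is at most `(n+1)^(α-β)`, whose tail beyond `q` is
at most `(q+1)^(1-(β-α)) / (β-α-1)` by comparison with `∫ x^(α-β) dx`. Both pieces are
`O((q+1)^(-(β-α-1)))`, uniformly in the length of the partial sum.
-/

open Finset Real

lemma sum_range_le_sum_range_add_sum_Ico {M : Type*} [AddCommMonoid M] [PartialOrder M]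
    [IsOrderedAddMonoid M] {f : ℕ → M} (hf : ∀ n, 0 ≤ f n) (m N : ℕ) :
    ∑ n ∈ range N, f n ≤ ∑ n ∈ range m, f n + ∑ n ∈ Ico m N, f n := by
  rcases le_total m N with hmN | hNm
  · exact (sum_range_add_sum_Ico f hmN).ge
  · calc ∑ n ∈ range N, f n ≤ ∑ n ∈ range m, f n :=
          sum_le_sum_of_subset_of_nonneg (range_subset_range.mpr hNm) fun n _ _ ↦ hf n
      _ ≤ ∑ n ∈ range m, f n + ∑ n ∈ Ico m N, f n :=
          le_add_of_nonneg_right (sum_nonneg fun n _ ↦ hf n)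

lemma mul_rpow_sub_one_mul_sub_le_rpow_sub_rpow {p : ℝ} (hp₀ : 0 ≤ p) (hp₁ : p ≤ 1)
    {x y : ℝ} (hx : 0 ≤ x) (hy : 0 < y) :
    p * y ^ (p - 1) * (y - x) ≤ y ^ p - x ^ p := by
  have hbern : (1 + (x / y - 1)) ^ p ≤ 1 + p * (x / y - 1) :=
    rpow_one_add_le_one_add_mul_self (by linarith [div_nonneg hx hy.le]) hp₀ hp₁
  rw [add_sub_cancel, div_rpow hx hy.le, div_le_iff₀ (rpow_pos_of_pos hy p)] at hbern
  have hyp : y ^ p = y ^ (p - 1) * y := by rw [rpow_sub_one hy.ne', div_mul_cancel₀ _ hy.ne']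
  have hexpand : (1 + p * (x / y - 1)) * y ^ p = y ^ p - p * y ^ (p - 1) * (y - x) := by
    rw [hyp]; field_simp; ring
  linarith

lemma sum_range_rpow_le {α : ℝ} (hα : -1 < α) (m : ℕ) :
    ∑ n ∈ range m, ((n : ℝ) + 1) ^ α ≤ max 1 (α + 1)⁻¹ * (m : ℝ) ^ (α + 1) := by
  have hp : 0 < α + 1 := by linarith
  rcases le_total α 0 with hα₀ | hα₀
  · have hstep (n : ℕ) :
        ((n : ℝ) + 1) ^ α ≤ (α + 1)⁻¹ * (((n + 1 : ℕ) : ℝ) ^ (α + 1) - (n : ℝ) ^ (α + 1)) := by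
      have := mul_rpow_sub_one_mul_sub_le_rpow_sub_rpow hp.le (by linarith) n.cast_nonneg
        (by positivity : (0 : ℝ) < n + 1)
      rw [add_sub_cancel_right, add_sub_cancel_left, mul_one] at this
      rw [le_inv_mul_iff₀ hp]
      exact_mod_cast this
    calc ∑ n ∈ range m, ((n : ℝ) + 1) ^ α
        ≤ ∑ n ∈ range m, (α + 1)⁻¹ * (((n + 1 : ℕ) : ℝ) ^ (α + 1) - (n : ℝ) ^ (α + 1)) :=
          sum_le_sum fun n _ ↦ hstep n
      _ = (α + 1)⁻¹ * (m : ℝ) ^ (α + 1) := by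
          rw [← mul_sum, sum_range_sub (fun n : ℕ ↦ (n : ℝ) ^ (α + 1)), Nat.cast_zero,
            zero_rpow hp.ne', sub_zero]
      _ ≤ max 1 (α + 1)⁻¹ * (m : ℝ) ^ (α + 1) := by gcongr; exact le_max_right _ _
  · calc ∑ n ∈ range m, ((n : ℝ) + 1) ^ α ≤ ∑ _n ∈ range m, (m : ℝ) ^ α := by
          gcongr with n hn
          exact_mod_cast mem_range.mp hn
      _ = (m : ℝ) ^ (α + 1) := by
          rw [sum_const, card_range, nsmul_eq_mul, rpow_add_one' m.cast_nonneg (by linarith)]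
          ring
      _ ≤ max 1 (α + 1)⁻¹ * (m : ℝ) ^ (α + 1) :=
          le_mul_of_one_le_left (by positivity) (le_max_left _ _)

lemma sum_Ico_rpow_neg_le {s : ℝ} (hs : 1 < s) {m : ℕ} (hm : 0 < m) (N : ℕ) :
    ∑ n ∈ Ico m N, ((n : ℝ) + 1) ^ (-s) ≤ (m : ℝ) ^ (1 - s) / (s - 1) := by
  have hm' : (0 : ℝ) < m := by exact_mod_cast hm
  rcases le_total m N with hmN | hNm
  · have hanti : AntitoneOn (fun x : ℝ ↦ x ^ (-s)) (Set.Icc (m : ℝ) N) :=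
      (antitoneOn_rpow_Ioi_of_exponent_nonpos (by linarith)).mono
        fun x hx ↦ hm'.trans_le hx.1
    have hzero : (0 : ℝ) ∉ Set.uIcc (m : ℝ) N := by
      rw [Set.uIcc_of_le (by exact_mod_cast hmN)]
      exact fun h ↦ hm'.not_ge h.1
    calc ∑ n ∈ Ico m N, ((n : ℝ) + 1) ^ (-s)
        ≤ ∫ x in (m : ℝ)..N, x ^ (-s) := by
          simpa only [Nat.cast_add, Nat.cast_one] using hanti.sum_le_integral_Ico hmN
      _ = ((m : ℝ) ^ (1 - s) - (N : ℝ) ^ (1 - s)) / (s - 1) := by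
          rw [integral_rpow (Or.inr ⟨by linarith, hzero⟩), neg_add_eq_sub, ← neg_sub s 1,
            div_neg, ← neg_div, neg_sub]
      _ ≤ (m : ℝ) ^ (1 - s) / (s - 1) := by
          gcongr
          exact sub_le_self _ (by positivity)
  · rw [Ico_eq_empty_of_le hNm, sum_empty]
    exact div_nonneg (by positivity) (by linarith)

lemma sum_range_rpow_div_rpow_le {α β : ℝ} (hα : -1 < α) (hβ : 0 ≤ β) (hβα : 1 < β - α)
    (q N : ℕ) :
    ∑ n ∈ range N, ((n : ℝ) + 1) ^ α / ((n : ℝ) + q + 1) ^ β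
      ≤ (max 1 (α + 1)⁻¹ + (β - α - 1)⁻¹) / ((q : ℝ) + 1) ^ (β - α - 1) := by
  have hq : (0 : ℝ) < q + 1 := by positivity
  have hhead (n : ℕ) : ((n : ℝ) + 1) ^ α / ((n : ℝ) + q + 1) ^ β
      ≤ ((n : ℝ) + 1) ^ α / ((q : ℝ) + 1) ^ β := by
    gcongr
    linarith [n.cast_nonneg (α := ℝ)]
  have htail (n : ℕ) : ((n : ℝ) + 1) ^ α / ((n : ℝ) + q + 1) ^ β ≤ ((n : ℝ) + 1) ^ (-(β - α)) := by
    calc ((n : ℝ) + 1) ^ α / ((n : ℝ) + q + 1) ^ β ≤ ((n : ℝ) + 1) ^ α / ((n : ℝ) + 1) ^ β := by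
          gcongr
          linarith [q.cast_nonneg (α := ℝ)]
      _ = ((n : ℝ) + 1) ^ (-(β - α)) := by rw [← rpow_sub (by positivity), neg_sub]
  have hscale : ((q : ℝ) + 1) ^ (1 - (β - α)) = (((q : ℝ) + 1) ^ (β - α - 1))⁻¹ := by
    rw [← rpow_neg hq.le, neg_sub]
  calc ∑ n ∈ range N, ((n : ℝ) + 1) ^ α / ((n : ℝ) + q + 1) ^ β
      ≤ ∑ n ∈ range (q + 1), ((n : ℝ) + 1) ^ α / ((n : ℝ) + q + 1) ^ β
          + ∑ n ∈ Ico (q + 1) N, ((n : ℝ) + 1) ^ α / ((n : ℝ) + q + 1) ^ β :=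
        sum_range_le_sum_range_add_sum_Ico (fun n ↦ by positivity) _ _
    _ ≤ (∑ n ∈ range (q + 1), ((n : ℝ) + 1) ^ α) / ((q : ℝ) + 1) ^ β
          + ∑ n ∈ Ico (q + 1) N, ((n : ℝ) + 1) ^ (-(β - α)) := by
        rw [sum_div]
        exact add_le_add (sum_le_sum fun n _ ↦ hhead n) (sum_le_sum fun n _ ↦ htail n)
    _ ≤ max 1 (α + 1)⁻¹ * ((q + 1 : ℕ) : ℝ) ^ (α + 1) / ((q : ℝ) + 1) ^ β
          + ((q + 1 : ℕ) : ℝ) ^ (1 - (β - α)) / (β - α - 1) := by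
        gcongr
        exacts [sum_range_rpow_le hα _, sum_Ico_rpow_neg_le hβα q.succ_pos N]
    _ = (max 1 (α + 1)⁻¹ + (β - α - 1)⁻¹) / ((q : ℝ) + 1) ^ (β - α - 1) := by
        rw [Nat.cast_add_one, mul_div_assoc, ← rpow_sub hq, show α + 1 - β = 1 - (β - α) by ring,
          hscale]
        ring

/-- if `α > -1`, `β ≥ 0` and `β - α > 1` then there is a constant `C > 0`
such that `∑_{n=0}^∞ (n+1)^α / (n+q+1)^β ≤ C / (q+1)^{β-α-1}` for every integer `q ≥ 0`
(in particular the series converges). -/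
theorem standardEstimate (α β : ℝ) (hα : -1 < α) (hβ : 0 ≤ β) (hβα : 1 < β - α) :
    ∃ C : ℝ, 0 < C ∧ ∀ q : ℕ,
      Summable (fun n : ℕ => ((n : ℝ) + 1)^α / ((n : ℝ) + q + 1)^β) ∧
      ∑' n : ℕ, ((n : ℝ) + 1)^α / ((n : ℝ) + q + 1)^β ≤ C / ((q : ℝ) + 1)^(β - α - 1) := by
  have hpos : 0 < max 1 (α + 1)⁻¹ + (β - α - 1)⁻¹ :=
    add_pos (one_pos.trans_le (le_max_left _ _)) (inv_pos.mpr (by linarith))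
  refine ⟨_, hpos, fun q ↦ ⟨?_, ?_⟩⟩
  · exact summable_of_sum_range_le (fun n ↦ by positivity)
      (sum_range_rpow_div_rpow_le hα hβ hβα q)
  · exact Real.tsum_le_of_sum_range_le (fun n ↦ by positivity)
      (sum_range_rpow_div_rpow_le hα hβ hβα q)
end
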